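/- arXiv:2409.06546 — 4 statements merged into one kernel-verified Lean document; each statement's English description precedes it below -/
import Mathlib

section
/- For every natural number n ≥ 1, ζ(2n) = (1 / (n · (2 - 2^{2-2n}) · Γ(2n-1))) · ∫_{-∞}^{∞} t^{2n-2} · log(1 + e^t) / (1 + e^t) dt, where the integral converges. Equivalently, ∫_{-∞}^{∞} t^{2n-2} log(1+e^t)/(1+e^t) dt = n · (2 - 2^{2-2n}) · (2n-2)! · ζ(2n). -/
/-!
Split `ℝ` at `0` and use `log (1 + eᵗ) = t + log (1 + e⁻ᵗ)`: with `a = 2n - 2` even, the integral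
becomes `∫₀^∞ t^(a+1) / (eᵗ + 1) dt + ∫₀^∞ t^a log (1 + e⁻ᵗ) dt`. Expanding `1 / (eᵗ + 1)` and
`log (1 + e⁻ᵗ)` in powers of `e⁻ᵗ` and integrating termwise (a Mellin transform), the two integrals
are `(a+1)! η(2n)` and `a! η(2n)`, where `η(2n) = ∑ (-1)ᵏ / (k+1)^(2n) = (1 - 2^(1-2n)) ζ(2n)`.
-/

open Real MeasureTheory Set
open scoped Nat

lemma integral_eq_integral_Ioi_add_comp_neg {E : Type*} [NormedAddCommGroup E] [NormedSpace ℝ E]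
    {f : ℝ → E} (h₁ : IntegrableOn f (Ioi 0)) (h₂ : IntegrableOn (fun t ↦ f (-t)) (Ioi 0)) :
    ∫ t, f t = ∫ t in Ioi 0, (f t + f (-t)) := by
  have hIic : IntegrableOn f (Iic 0) :=
    (integrableOn_Iic_iff_integrableOn_Iio).2 (by simpa using h₂.comp_neg)
  rw [← intervalIntegral.integral_Iic_add_Ioi hIic h₁, integral_add h₁ h₂, add_comm,
    ← neg_zero, ← integral_comp_neg_Ioi, neg_zero]

lemma hasSum_integral_Ioi_pow_mul {ι : Type*} [Countable ι] {c p : ι → ℝ} {F : ℝ → ℝ} (k : ℕ)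
    (hp : ∀ i, 0 < p i) (hF : ∀ t ∈ Ioi 0, HasSum (fun i ↦ c i * exp (-p i * t)) (F t))
    (h_sum : Summable fun i ↦ |c i| / p i ^ (k + 1)) :
    HasSum (fun i ↦ k ! * c i / p i ^ (k + 1)) (∫ t in Ioi 0, t ^ k * F t) := by
  have h := hasSum_mellin (a := fun i ↦ (c i : ℂ)) (F := fun t ↦ (F t : ℂ)) (s := k + 1)
    (fun i ↦ Or.inr (hp i))
    (by simp only [Complex.add_re, Complex.natCast_re, Complex.one_re]; positivity)
    (fun t ht ↦ by exact_mod_cast Complex.hasSum_ofReal.2 (hF t ht))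
    (by simpa [← Real.rpow_natCast] using h_sum)
  rw [← Complex.hasSum_ofReal]
  convert h using 1
  · ext i
    rw [Complex.Gamma_nat_eq_factorial, ← Nat.cast_add_one, Complex.cpow_natCast]
    norm_cast
  · rw [mellin, ← integral_complex_ofReal]
    refine setIntegral_congr_fun measurableSet_Ioi fun t _ ↦ ?_
    simp

lemma summable_one_div_nat_add_one_pow {p : ℕ} (hp : 1 < p) :
    Summable fun k : ℕ ↦ 1 / ((k : ℝ) + 1) ^ p := by
  simpa using (summable_nat_add_iff 1).2 (summable_one_div_nat_pow.2 hp)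

lemma hasSum_alternating_one_div_pow {p : ℕ} (hp : 1 < p) :
    HasSum (fun k : ℕ ↦ (-1) ^ k / ((k : ℝ) + 1) ^ p)
      ((1 - 2 / 2 ^ p) * ∑' k : ℕ, 1 / ((k : ℝ) + 1) ^ p) := by
  set g : ℕ → ℝ := fun k ↦ 1 / ((k : ℝ) + 1) ^ p
  set Z := ∑' k, g k
  have hg : Summable g := summable_one_div_nat_add_one_pow hp
  have hodd : HasSum (fun k ↦ g (2 * k + 1)) ((2 ^ p)⁻¹ * Z) := by
    have h (k : ℕ) : g (2 * k + 1) = (2 ^ p)⁻¹ * g k := by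
      simp only [g]
      push_cast
      rw [show (2 * k + 1 + 1 : ℝ) = 2 * (k + 1) by ring, mul_pow]
      field_simp
    simpa only [h] using hg.hasSum.mul_left (2 ^ p)⁻¹
  have heven : HasSum (fun k ↦ g (2 * k)) ((1 - (2 ^ p)⁻¹) * Z) := by
    have hs : Summable fun k ↦ g (2 * k) :=
      hg.comp_injective (mul_right_injective₀ two_ne_zero)
    convert hs.hasSum using 1
    linarith [tsum_even_add_odd hs hodd.summable, hodd.tsum_eq]
  convert HasSum.even_add_odd (f := fun k : ℕ ↦ (-1) ^ k / ((k : ℝ) + 1) ^ p)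
    (by simpa [pow_mul, g] using heven) (by simpa [pow_succ, pow_mul, g, neg_div] using hodd.neg)
    using 1
  ring

lemma riemannZeta_natCast_eq_tsum {p : ℕ} (hp : 1 < p) :
    riemannZeta p = ((∑' k : ℕ, 1 / ((k : ℝ) + 1) ^ p : ℝ) : ℂ) := by
  rw [zeta_eq_tsum_one_div_nat_add_one_cpow (by simpa using hp), Complex.ofReal_tsum]
  push_cast
  simp_rw [Complex.cpow_natCast]

lemma abs_neg_exp_neg_lt_one {t : ℝ} (ht : 0 < t) : |-exp (-t)| < 1 := by
  rw [abs_neg, abs_exp, exp_lt_one_iff]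
  linarith

lemma hasSum_one_div_exp_add_one {t : ℝ} (ht : 0 < t) :
    HasSum (fun k : ℕ ↦ (-1) ^ k * exp (-((k : ℝ) + 1) * t)) (1 / (exp t + 1)) := by
  have h := (hasSum_geometric_of_abs_lt_one (abs_neg_exp_neg_lt_one ht)).mul_right (exp (-t))
  have e (k : ℕ) : (-exp (-t)) ^ k * exp (-t) = (-1) ^ k * exp (-((k : ℝ) + 1) * t) := by
    rw [neg_pow, mul_assoc, ← exp_nat_mul, ← exp_add]
    ring_nf
  have hsum : (1 - -exp (-t))⁻¹ * exp (-t) = 1 / (exp t + 1) := by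
    rw [exp_neg, sub_neg_eq_add]
    field_simp
  rwa [funext e, hsum] at h

lemma hasSum_log_one_add_exp_neg {t : ℝ} (ht : 0 < t) :
    HasSum (fun k : ℕ ↦ (-1) ^ k / ((k : ℝ) + 1) * exp (-((k : ℝ) + 1) * t))
      (log (1 + exp (-t))) := by
  have h := (hasSum_pow_div_log_of_abs_lt_one (abs_neg_exp_neg_lt_one ht)).neg
  have e (k : ℕ) : -((-exp (-t)) ^ (k + 1) / (k + 1)) =
      (-1) ^ k / ((k : ℝ) + 1) * exp (-((k : ℝ) + 1) * t) := by
    rw [neg_pow, ← exp_nat_mul, pow_succ]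
    push_cast
    ring_nf
  rwa [funext e, sub_neg_eq_add, neg_neg] at h

lemma hasSum_integral_pow_mul_one_div_exp_add_one {k : ℕ} (hk : 0 < k) :
    HasSum (fun j : ℕ ↦ k ! * (-1) ^ j / ((j : ℝ) + 1) ^ (k + 1))
      (∫ t in Ioi 0, t ^ k * (1 / (exp t + 1))) :=
  hasSum_integral_Ioi_pow_mul k (fun j ↦ by positivity) (fun t ↦ hasSum_one_div_exp_add_one)
    (by simpa using summable_one_div_nat_add_one_pow (p := k + 1) (by omega))

lemma hasSum_integral_pow_mul_log_one_add_exp_neg (k : ℕ) :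
    HasSum (fun j : ℕ ↦ k ! * (-1) ^ j / ((j : ℝ) + 1) ^ (k + 2))
      (∫ t in Ioi 0, t ^ k * log (1 + exp (-t))) := by
  convert hasSum_integral_Ioi_pow_mul k (fun j ↦ by positivity)
    (fun t ↦ hasSum_log_one_add_exp_neg) ?_ using 2 with j
  · field_simp
    ring
  · convert summable_one_div_nat_add_one_pow (p := k + 2) (by omega) using 2 with j
    rw [abs_div, abs_pow, abs_neg, abs_one, one_pow, abs_of_pos (by positivity)]
    field_simp
    ring

lemma integrableOn_pow_mul_exp_neg (k : ℕ) :
    IntegrableOn (fun t : ℝ ↦ t ^ k * exp (-t)) (Ioi 0) := by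
  simpa using integrableOn_rpow_mul_exp_neg_rpow (s := k) (by linarith [k.cast_nonneg (α := ℝ)])
    one_pos

lemma integrableOn_pow_mul_of_le_exp_neg {g : ℝ → ℝ} (k : ℕ) (hg : Measurable g)
    (hg₀ : ∀ t, 0 < t → 0 ≤ g t) (hle : ∀ t, 0 < t → g t ≤ exp (-t)) :
    IntegrableOn (fun t ↦ t ^ k * g t) (Ioi 0) := by
  refine (integrableOn_pow_mul_exp_neg k).mono' (by fun_prop) ?_
  filter_upwards [ae_restrict_mem measurableSet_Ioi] with t (ht : 0 < t)
  rw [Real.norm_of_nonneg (mul_nonneg (pow_nonneg ht.le k) (hg₀ t ht))]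
  exact mul_le_mul_of_nonneg_left (hle t ht) (pow_nonneg ht.le k)

lemma integrableOn_pow_mul_one_div_exp_add_one (k : ℕ) :
    IntegrableOn (fun t : ℝ ↦ t ^ k * (1 / (exp t + 1))) (Ioi 0) :=
  integrableOn_pow_mul_of_le_exp_neg k (by fun_prop) (fun t _ ↦ by positivity) fun t _ ↦ by
    rw [exp_neg, one_div]
    exact inv_anti₀ (exp_pos t) (by linarith)

lemma integrableOn_pow_mul_log_one_add_exp_neg (k : ℕ) :
    IntegrableOn (fun t : ℝ ↦ t ^ k * log (1 + exp (-t))) (Ioi 0) :=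
  integrableOn_pow_mul_of_le_exp_neg k (by fun_prop)
    (fun t _ ↦ log_nonneg (by linarith [exp_pos (-t)]))
    fun t _ ↦ by linarith [log_le_sub_one_of_pos (by positivity : 0 < 1 + exp (-t))]

lemma log_one_add_exp (t : ℝ) : log (1 + exp t) = t + log (1 + exp (-t)) := by
  have h : 1 + exp t = exp t * (1 + exp (-t)) := by
    rw [mul_add, ← exp_add, add_neg_cancel, exp_zero, mul_one, add_comm]
  rw [h, log_mul (exp_pos t).ne' (by positivity), log_exp]

lemma pow_mul_log_one_add_exp_div_add_comp_neg {a : ℕ} (ha : Even a) (t : ℝ) :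
    t ^ a * log (1 + exp t) / (1 + exp t) + (-t) ^ a * log (1 + exp (-t)) / (1 + exp (-t)) =
      t ^ (a + 1) * (1 / (exp t + 1)) + t ^ a * log (1 + exp (-t)) := by
  rw [ha.neg_pow, log_one_add_exp, exp_neg]
  field_simp
  ring

lemma integral_pow_mul_log_one_add_exp_div {a : ℕ} (ha : Even a) :
    ∫ t : ℝ, t ^ a * log (1 + exp t) / (1 + exp t) =
      a ! * (a + 2) * ((1 - 2 / 2 ^ (a + 2)) * ∑' k : ℕ, 1 / ((k : ℝ) + 1) ^ (a + 2)) := by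
  set f : ℝ → ℝ := fun t ↦ t ^ a * log (1 + exp t) / (1 + exp t)
  set g : ℝ → ℝ := fun t ↦ t ^ (a + 1) * (1 / (exp t + 1)) + t ^ a * log (1 + exp (-t))
  have hfg (t : ℝ) : f t + f (-t) = g t := pow_mul_log_one_add_exp_div_add_comp_neg ha t
  have hf₀ (t : ℝ) : 0 ≤ f t :=
    div_nonneg (mul_nonneg (ha.pow_nonneg t) (log_nonneg (by linarith [exp_pos t])))
      (by positivity)
  have hg : IntegrableOn g (Ioi 0) :=
    (integrableOn_pow_mul_one_div_exp_add_one _).add (integrableOn_pow_mul_log_one_add_exp_neg _)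
  have hf_meas : Measurable f := by fun_prop
  have hf : IntegrableOn f (Ioi 0) :=
    hg.mono' hf_meas.aestronglyMeasurable (ae_of_all _ fun t ↦ by
      rw [Real.norm_of_nonneg (hf₀ t), ← hfg]; linarith [hf₀ (-t)])
  have hf_neg : IntegrableOn (fun t ↦ f (-t)) (Ioi 0) :=
    hg.mono' (hf_meas.comp measurable_neg).aestronglyMeasurable (ae_of_all _ fun t ↦ by
      rw [Real.norm_of_nonneg (hf₀ (-t)), ← hfg]; linarith [hf₀ t])
  have hη := hasSum_alternating_one_div_pow (p := a + 2) (by omega)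
  have h₁ := (hasSum_integral_pow_mul_one_div_exp_add_one (k := a + 1) (by omega)).unique
    (by simpa only [mul_div_assoc] using hη.mul_left ((a + 1)! : ℝ))
  have h₂ := (hasSum_integral_pow_mul_log_one_add_exp_neg a).unique
    (by simpa only [mul_div_assoc] using hη.mul_left (a ! : ℝ))
  rw [integral_eq_integral_Ioi_add_comp_neg hf hf_neg, funext hfg,
    integral_add (integrableOn_pow_mul_one_div_exp_add_one _)
      (integrableOn_pow_mul_log_one_add_exp_neg _), h₁, h₂, Nat.factorial_succ]
  push_cast
  ring

/-- For every natural number `n ≥ 1`,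
`ζ(2n) = (1 / (n·(2 - 2^{2-2n})·Γ(2n-1))) · ∫_{-∞}^{∞} t^{2n-2}·log(1+e^t)/(1+e^t) dt`. -/
theorem zeta_even_eq_integral (n : ℕ) (hn : 1 ≤ n) :
    riemannZeta (2 * n) =
      ((1 / (n * (2 - (2 : ℝ) ^ ((2 : ℤ) - 2 * n)) * Real.Gamma (2 * n - 1)) *
        ∫ t : ℝ, t ^ (2 * n - 2) * Real.log (1 + Real.exp t) / (1 + Real.exp t) : ℝ) : ℂ) := by
  obtain ⟨m, rfl⟩ : ∃ m, n = m + 1 := ⟨n - 1, by omega⟩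
  have hzeta : riemannZeta (2 * ((m + 1 : ℕ) : ℂ)) = riemannZeta ((2 * m + 2 : ℕ) : ℂ) := by
    push_cast; ring_nf
  have hGamma : Real.Gamma (2 * ((m + 1 : ℕ) : ℝ) - 1) = (2 * m) ! := by
    rw [← Real.Gamma_nat_eq_factorial]; push_cast; ring_nf
  rw [hzeta, riemannZeta_natCast_eq_tsum (by omega), show 2 * (m + 1) - 2 = 2 * m by omega,
    integral_pow_mul_log_one_add_exp_div (even_two_mul m), hGamma]
  congr 1
  have hpow : (2 : ℝ) ^ ((2 : ℤ) - 2 * ((m + 1 : ℕ) : ℤ)) = (2 ^ (2 * m))⁻¹ := by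
    rw [show (2 : ℤ) - 2 * ((m + 1 : ℕ) : ℤ) = -((2 * m : ℕ) : ℤ) by push_cast; ring,
      zpow_neg, zpow_natCast]
  have hne : (2 : ℝ) * 2 ^ (2 * m) - 1 ≠ 0 := by
    linarith [one_le_pow₀ (M₀ := ℝ) (n := 2 * m) one_le_two]
  rw [hpow]
  push_cast
  field_simp
  ring
end

section
/- For every natural number m ≥ 0, ∑_{i=0}^{m} (2^{2i} - 2) · C(2m+1, 2i) · B_{2i} = -δ_{m,0}, where δ_{m,0} is 1 if m = 0 and 0 otherwise. -/
/-!
With `B(t) = t / (eᵗ - 1) = ∑ Bₙ tⁿ / n!`, one checks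
`(B(2t) - 2 B(t)) eᵗ = -(2t + B(2t))` by clearing the denominator `e²ᵗ - 1`.
Comparing coefficients of `tⁿ` gives `∑ₖ (2ᵏ - 2) C(n, k) Bₖ = -(2ⁿ Bₙ + 2 δₙ₁)`.
For `n = 2m + 1` only even `k` contribute (the factor `2ᵏ - 2` kills `k = 1`), and the right
side is `-1` for `m = 0` and `0` otherwise since `Bₙ` vanishes at odd `n > 1`.
-/

open PowerSeries Finset

theorem Finset.sum_range_two_mul_of_odd_eq_zero {M : Type*} [AddCommMonoid M] (f : ℕ → M)
    (hf : ∀ i, f (2 * i + 1) = 0) (N : ℕ) :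
    ∑ k ∈ range (2 * N), f k = ∑ i ∈ range N, f (2 * i) := by
  induction N with
  | zero => simp
  | succ N ih => rw [Nat.mul_succ, sum_range_succ, sum_range_succ, sum_range_succ, ih, hf, add_zero]

theorem PowerSeries.exp_sq_sub_one_ne_zero : exp ℚ ^ 2 - 1 ≠ 0 := by
  have h_sub : exp ℚ - 1 ≠ 0 :=
    right_ne_zero_of_mul (bernoulliPowerSeries_mul_exp_sub_one ℚ ▸ X_ne_zero)
  have h_add : exp ℚ + 1 ≠ 0 := fun h => by
    simpa using congrArg (constantCoeff (R := ℚ)) h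
  rw [show exp ℚ ^ 2 - 1 = (exp ℚ - 1) * (exp ℚ + 1) by ring]
  exact mul_ne_zero h_sub h_add

theorem rescale_two_bernoulliPowerSeries_mul_exp_sq_sub_one :
    rescale (2 : ℚ) (bernoulliPowerSeries ℚ) * (exp ℚ ^ 2 - 1) = 2 * X := by
  rw [exp_pow_eq_rescale_exp, Nat.cast_ofNat, ← map_one (rescale (2 : ℚ)), ← map_sub,
    ← map_mul, bernoulliPowerSeries_mul_exp_sub_one, rescale_X, map_ofNat]

theorem rescale_two_bernoulliPowerSeries_sub_two_mul_mul_exp :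
    (rescale (2 : ℚ) (bernoulliPowerSeries ℚ) - 2 * bernoulliPowerSeries ℚ) * exp ℚ =
      -(2 * X + rescale (2 : ℚ) (bernoulliPowerSeries ℚ)) := by
  refine mul_right_cancel₀ exp_sq_sub_one_ne_zero ?_
  have h₁ := bernoulliPowerSeries_mul_exp_sub_one ℚ
  have h₂ := rescale_two_bernoulliPowerSeries_mul_exp_sq_sub_one
  linear_combination -2 * exp ℚ * (exp ℚ + 1) * h₁ + (exp ℚ + 1) * h₂

theorem factorial_mul_coeff_rescale_two_bernoulliPowerSeries_sub_two_mul_mul_exp (n : ℕ) :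
    n.factorial * coeff n
        ((rescale (2 : ℚ) (bernoulliPowerSeries ℚ) - 2 * bernoulliPowerSeries ℚ) * exp ℚ) =
      ∑ k ∈ range (n + 1), ((2 : ℚ) ^ k - 2) * n.choose k * bernoulli k := by
  rw [coeff_mul, Nat.sum_antidiagonal_eq_sum_range_succ_mk, mul_sum, ← map_ofNat C 2]
  refine sum_congr rfl fun k hk => ?_
  have hkn : k ≤ n := Nat.lt_succ_iff.mp (mem_range.mp hk)
  simp only [map_sub, coeff_rescale, coeff_C_mul, bernoulliPowerSeries, coeff_mk, coeff_exp,
    Algebra.algebraMap_self, RingHom.id_apply, Nat.cast_choose ℚ hkn]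
  field_simp

theorem sum_range_succ_two_pow_sub_two_mul_choose_mul_bernoulli (n : ℕ) :
    ∑ k ∈ range (n + 1), ((2 : ℚ) ^ k - 2) * n.choose k * bernoulli k =
      -(2 ^ n * bernoulli n + if n = 1 then 2 else 0) := by
  rw [← factorial_mul_coeff_rescale_two_bernoulliPowerSeries_sub_two_mul_mul_exp,
    rescale_two_bernoulliPowerSeries_sub_two_mul_mul_exp, ← map_ofNat C 2]
  simp only [map_neg, map_add, coeff_C_mul, coeff_X, coeff_rescale, bernoulliPowerSeries, coeff_mk,
    Algebra.algebraMap_self, RingHom.id_apply]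
  have h_fact := n.factorial_ne_zero
  split_ifs with hn
  · subst hn; norm_num
  · field_simp; ring

/-- For every natural number `m ≥ 0`,
`∑_{i=0}^m (2^{2i} - 2) · C(2m+1, 2i) · B_{2i} = -δ_{m,0}`. -/
theorem sum_two_pow_sub_two_choose_bernoulli (m : ℕ) :
    ∑ i ∈ Finset.range (m + 1),
        ((2 : ℚ) ^ (2 * i) - 2) * (Nat.choose (2 * m + 1) (2 * i) : ℚ) * bernoulli (2 * i) =
      -(if m = 0 then 1 else 0) := by
  have h_odd (i : ℕ) :
      ((2 : ℚ) ^ (2 * i + 1) - 2) * (2 * m + 1).choose (2 * i + 1) * bernoulli (2 * i + 1) =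
        0 := by
    rcases i.eq_zero_or_pos with rfl | hi
    · norm_num
    · rw [bernoulli_eq_zero_of_odd (odd_two_mul_add_one i) (by omega), mul_zero]
  rw [← sum_range_two_mul_of_odd_eq_zero
      (fun k => ((2 : ℚ) ^ k - 2) * (2 * m + 1).choose k * bernoulli k) h_odd,
    show 2 * (m + 1) = 2 * m + 1 + 1 by ring,
    sum_range_succ_two_pow_sub_two_mul_choose_mul_bernoulli]
  rcases m.eq_zero_or_pos with rfl | hm
  · norm_num [bernoulli_one]
  · rw [bernoulli_eq_zero_of_odd (odd_two_mul_add_one m) (by omega)]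
    simp [hm.ne']
end

section
/- For every natural number n ≥ 0, ∫_{0}^{∞} t^{n+1} / (1 + e^t) dt = (1 - 2^{-1-n}) · ζ(n+2) · Γ(n+2) = (1 - 2^{-1-n}) · (n+1)! · ζ(n+2). -/
/-!
For `t > 0`, `1 / (1 + e^t) = ∑ (-1)^i e^{-(i+1)t}`; integrating term by term against `t^{s-1}`
turns the Mellin transform of `1 / (1 + e^t)` into `Γ(s) ∑ (-1)^i (i+1)^{-s}`. The odd-indexed terms
of `ζ(s) = ∑ (i+1)^{-s}` add up to `2^{-s} ζ(s)`, so the alternating series is `(1 - 2^{1-s}) ζ(s)`.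
Take `s = n + 2`.
-/

open Real MeasureTheory

theorem HasSum.alternating_of_hasSum_odd {α : Type*} [Ring α] [UniformSpace α]
    [IsUniformAddGroup α] [CompleteSpace α] [T2Space α] {f : ℕ → α} {a b : α}
    (hf : HasSum f a) (hodd : HasSum (fun k ↦ f (2 * k + 1)) b) :
    HasSum (fun n ↦ (-1) ^ n * f n) (a - 2 * b) := by
  obtain ⟨e, heven⟩ : Summable fun k ↦ f (2 * k) :=
    hf.summable.comp_injective (mul_right_injective₀ two_ne_zero)
  have he : e = a - b := eq_sub_of_add_eq ((heven.even_add_odd hodd).unique hf)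
  have h := (heven.congr_fun fun k ↦ by simp [pow_mul]).even_add_odd
    (f := fun n ↦ (-1) ^ n * f n) (hodd.neg.congr_fun fun k ↦ by simp [pow_succ, pow_mul])
  rwa [he, ← sub_eq_add_neg, sub_sub, ← two_mul] at h

theorem hasSum_neg_one_pow_mul_exp_neg_succ_mul {t : ℝ} (ht : 0 < t) :
    HasSum (fun i : ℕ ↦ (-1) ^ i * Real.exp (-(i + 1) * t)) (1 + Real.exp t)⁻¹ := by
  have hr : ‖-Real.exp (-t)‖ < 1 := by
    rw [norm_neg, Real.norm_of_nonneg (exp_pos _).le, exp_lt_one_iff]; linarith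
  have h := (hasSum_geometric_of_norm_lt_one hr).mul_right (Real.exp (-t))
  have hsum : (1 - -Real.exp (-t))⁻¹ * Real.exp (-t) = (1 + Real.exp t)⁻¹ := by
    rw [sub_neg_eq_add, exp_neg]; field_simp; ring
  rw [hsum] at h
  refine h.congr_fun fun i ↦ ?_
  rw [neg_pow (Real.exp _), ← exp_nat_mul, mul_assoc, ← exp_add]
  ring_nf

theorem hasSum_neg_one_pow_div_nat_add_one_cpow {s : ℂ} (hs : 1 < s.re) :
    HasSum (fun i : ℕ ↦ (-1) ^ i / ((i : ℂ) + 1) ^ s) ((1 - 2 ^ (1 - s)) * riemannZeta s) := by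
  have hζ : HasSum (fun i : ℕ ↦ 1 / ((i : ℂ) + 1) ^ s) (riemannZeta s) := by
    rw [zeta_eq_tsum_one_div_nat_add_one_cpow hs]
    exact_mod_cast
      ((summable_nat_add_iff 1).mpr (Complex.summable_one_div_nat_cpow.mpr hs)).hasSum
  have hodd :
      HasSum (fun k : ℕ ↦ 1 / (((2 * k + 1 : ℕ) : ℂ) + 1) ^ s) (2 ^ (-s) * riemannZeta s) := by
    refine (hζ.mul_left _).congr_fun fun k ↦ ?_
    have : ((2 * k + 1 : ℕ) : ℂ) + 1 = ((2 : ℝ) : ℂ) * (((k : ℝ) + 1 : ℝ) : ℂ) := by push_cast; ring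
    rw [this, Complex.mul_cpow_ofReal_nonneg (by norm_num) (by positivity), Complex.cpow_neg]
    push_cast
    field_simp
  have hval :
      (1 - 2 ^ (1 - s)) * riemannZeta s = riemannZeta s - 2 * (2 ^ (-s) * riemannZeta s) := by
    rw [Complex.cpow_sub _ _ two_ne_zero, Complex.cpow_one, Complex.cpow_neg]
    ring
  rw [hval]
  exact (hζ.alternating_of_hasSum_odd hodd).congr_fun fun i ↦ (mul_one_div _ _).symm

theorem mellin_inv_one_add_exp {s : ℂ} (hs : 1 < s.re) :
    mellin (fun t : ℝ ↦ (((1 + Real.exp t)⁻¹ : ℝ) : ℂ)) s =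
      Complex.Gamma s * ((1 - 2 ^ (1 - s)) * riemannZeta s) := by
  have hF : ∀ t ∈ Set.Ioi (0 : ℝ),
      HasSum (fun i : ℕ ↦ (-1 : ℂ) ^ i * Real.exp (-((i : ℝ) + 1) * t))
        (((1 + Real.exp t)⁻¹ : ℝ) : ℂ) := fun t ht ↦ by
    exact_mod_cast Complex.hasSum_ofReal.mpr (hasSum_neg_one_pow_mul_exp_neg_succ_mul ht)
  have hsum : Summable fun i : ℕ ↦ ‖(-1 : ℂ) ^ i‖ / ((i : ℝ) + 1) ^ s.re := by
    refine ((Real.summable_one_div_nat_add_rpow 1 s.re).mpr hs).congr fun i ↦ ?_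
    rw [abs_of_nonneg (by positivity)]
    simp
  refine ((hasSum_mellin (fun i ↦ Or.inr (by positivity)) (by linarith) hF hsum).unique ?_)
  simpa [mul_div_assoc] using
    (hasSum_neg_one_pow_div_nat_add_one_cpow hs).mul_left (Complex.Gamma s)

/-- For every natural number `n ≥ 0`,
`∫_0^∞ t^{n+1}/(1+e^t) dt = (1 - 2^{-1-n})·ζ(n+2)·Γ(n+2) = (1 - 2^{-1-n})·(n+1)!·ζ(n+2)`. -/
theorem integral_pow_div_one_add_exp (n : ℕ) :
    ((∫ t in Set.Ioi (0 : ℝ), t ^ (n + 1) / (1 + Real.exp t) : ℝ) : ℂ) =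
        (1 - (2 : ℂ) ^ (-1 - (n : ℤ))) * riemannZeta (n + 2) * Complex.Gamma (n + 2) ∧
      ((∫ t in Set.Ioi (0 : ℝ), t ^ (n + 1) / (1 + Real.exp t) : ℝ) : ℂ) =
        (1 - (2 : ℂ) ^ (-1 - (n : ℤ))) * (Nat.factorial (n + 1)) * riemannZeta (n + 2) := by
  have hs : 1 < ((n : ℂ) + 2).re := by
    simp only [Complex.add_re, Complex.natCast_re, Complex.re_ofNat]
    linarith [(n.cast_nonneg : (0 : ℝ) ≤ n)]
  have hs_sub_one : (n : ℂ) + 2 - 1 = ((n + 1 : ℕ) : ℂ) := by push_cast; ring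
  have hmellin : ((∫ t in Set.Ioi (0 : ℝ), t ^ (n + 1) / (1 + Real.exp t) : ℝ) : ℂ) =
      mellin (fun t : ℝ ↦ (((1 + Real.exp t)⁻¹ : ℝ) : ℂ)) (n + 2) := by
    rw [mellin, hs_sub_one]
    refine integral_ofReal.symm.trans (setIntegral_congr_fun measurableSet_Ioi fun t _ ↦ ?_)
    rw [Complex.cpow_natCast, smul_eq_mul, div_eq_mul_inv]
    norm_cast
  have hΓ : Complex.Gamma (n + 2) = (n + 1).factorial := by
    rw [← Complex.Gamma_nat_eq_factorial, ← hs_sub_one, sub_add_cancel]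
  have h2 : (2 : ℂ) ^ (1 - ((n : ℂ) + 2)) = 2 ^ (-1 - (n : ℤ)) := by
    rw [← Complex.cpow_intCast]
    push_cast
    ring_nf
  rw [hmellin, mellin_inv_one_add_exp hs, h2, ← hΓ]
  constructor <;> ring
end

section
/- For all natural numbers j, k with 1 ≤ k ≤ j, ∑_{ℓ=k}^{j} (2j-1)! · (2 - 2^{2-2j+2ℓ}) · ζ(2(j-ℓ)) · (-1)^{ℓ+k} · π^{2(ℓ-k)} / ((2ℓ-2k+1)! · (2k-1)!) = δ_{j,k}, where ζ(0) = -1/2 and δ_{j,k} is 1 if j = k and 0 otherwise. (In matrix terms: the lower triangular matrix with entries a_{j,k} = (2j-1)!(2-2^{2-2j+2k})ζ(2j-2k) has inverse with entries b_{j,k} = (-1)^{j+k} π^{2(j-k)} / ((2j-2k+1)!(2k-1)!).) -/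
/-!
Put `ℓ = k + i`, `n = j - ℓ` and `m = j - k = n + i`. Euler's formula for `ζ(2n)` turns the
summand into `(2j-1)!/(2k-1)! · π^(2m) · c n · s i` with
`c n = (-1)^(n+1) (4^n - 2) B_{2n} / (2n)!` and `s i = (-1)^i / (2i+1)!`, the Taylor
coefficients of `x / sin x` and `sin x / x`; so the sum is a coefficient of their product,
which is `1`. Concretely, for `m ≥ 1` the required identity
`∑ n, C(2m+1, 2n) (4^n - 2) B_{2n} = 0` follows from `B_{2m+1}(1/2) = 0` (by the symmetry
`B_N(1 - x) = (-1)^N B_N(x)`) and `B_{2m+1}(1) = 0`: the odd-index terms drop out because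
`2^1 - 2 = 0` and `B_k = 0` for odd `k > 1`.
-/

open Real Finset Nat

theorem Finset.sum_range_two_mul {M : Type*} [AddCommMonoid M] (f : ℕ → M) (n : ℕ) :
    ∑ i ∈ range (2 * n), f i = ∑ i ∈ range n, (f (2 * i) + f (2 * i + 1)) := by
  induction n with
  | zero => simp
  | succ n ih => rw [Nat.mul_succ, sum_range_succ, sum_range_succ, sum_range_succ, ih, add_assoc]

theorem Finset.sum_Icc_add_eq_sum_antidiagonal {M : Type*} [AddCommMonoid M] (f : ℕ → M)
    (k m : ℕ) : ∑ ℓ ∈ Icc k (k + m), f ℓ = ∑ p ∈ antidiagonal m, f (k + p.2) := by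
  refine sum_nbij' (fun ℓ => (k + m - ℓ, ℓ - k)) (fun p => k + p.2) ?_ ?_ ?_ ?_ ?_ <;>
    intro x hx <;> simp only [mem_Icc, HasAntidiagonal.mem_antidiagonal] at hx ⊢ <;> grind

namespace Polynomial

theorem bernoulli_eval_half_of_odd {n : ℕ} (hn : Odd n) :
    (bernoulli n).eval (1 / 2 : ℚ) = 0 := by
  have h := bernoulli_eval_one_sub n (1 / 2)
  rw [hn.neg_one_pow] at h
  norm_num at h
  linarith

theorem two_pow_mul_bernoulli_eval_half (n : ℕ) :
    2 ^ n * (bernoulli n).eval (1 / 2 : ℚ) =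
      ∑ i ∈ range (n + 1), (n.choose i : ℚ) * _root_.bernoulli i * 2 ^ i := by
  rw [bernoulli, eval_finsetSum, mul_sum]
  refine sum_congr rfl fun i hi => ?_
  obtain ⟨d, rfl⟩ := Nat.exists_eq_add_of_le (mem_range_succ_iff.mp hi)
  rw [eval_monomial, Nat.add_sub_cancel_left, pow_add, one_div_pow]
  field_simp

end Polynomial

theorem sum_range_succ_choose_mul_bernoulli_mul_two_pow_of_odd {n : ℕ} (hn : Odd n) :
    ∑ i ∈ range (n + 1), (n.choose i : ℚ) * bernoulli i * 2 ^ i = 0 := by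
  rw [← Polynomial.two_pow_mul_bernoulli_eval_half, Polynomial.bernoulli_eval_half_of_odd hn,
    mul_zero]

theorem sum_range_succ_choose_mul_bernoulli_of_odd {n : ℕ} (hn : Odd n) (h1 : 1 < n) :
    ∑ i ∈ range (n + 1), (n.choose i : ℚ) * bernoulli i = 0 := by
  rw [sum_range_succ, sum_bernoulli, if_neg h1.ne', bernoulli_eq_zero_of_odd hn h1, mul_zero,
    add_zero]

theorem sum_range_choose_two_mul_mul_four_pow_sub_two_mul_bernoulli {m : ℕ} (hm : m ≠ 0) :
    ∑ n ∈ range (m + 1),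
      ((2 * m + 1).choose (2 * n) : ℚ) * (4 ^ n - 2) * bernoulli (2 * n) = 0 := by
  have hodd : Odd (2 * m + 1) := odd_two_mul_add_one m
  have hall : ∑ i ∈ range (2 * (m + 1)),
      ((2 * m + 1).choose i : ℚ) * (2 ^ i - 2) * bernoulli i = 0 := by
    have h := sum_range_succ_choose_mul_bernoulli_mul_two_pow_of_odd hodd
    have h' := sum_range_succ_choose_mul_bernoulli_of_odd hodd (by omega)
    simp only [mul_sub, sub_mul, sum_sub_distrib, mul_right_comm _ (2 : ℚ), ← sum_mul,
      mul_right_comm _ (2 ^ _ : ℚ)]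
    rw [show 2 * (m + 1) = 2 * m + 1 + 1 by ring, h, h', zero_mul, sub_zero]
  rw [sum_range_two_mul] at hall
  rw [← hall]
  refine sum_congr rfl fun n _ => ?_
  rcases Nat.eq_zero_or_pos n with rfl | hn
  · simp
  · rw [bernoulli_eq_zero_of_odd (odd_two_mul_add_one n) (by omega), pow_mul]
    norm_num

def xCscCoeff (n : ℕ) : ℚ := (-1) ^ (n + 1) * (4 ^ n - 2) * bernoulli (2 * n) / (2 * n)!

def sincCoeff (i : ℕ) : ℚ := (-1) ^ i / (2 * i + 1)!

theorem xCscCoeff_mul_sincCoeff (n i : ℕ) :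
    xCscCoeff n * sincCoeff i = (-1) ^ (n + i + 1) / (2 * (n + i) + 1)! *
      (((2 * (n + i) + 1).choose (2 * n) : ℚ) * (4 ^ n - 2) * bernoulli (2 * n)) := by
  have hfac : ((2 * (n + i) + 1).choose (2 * n) : ℚ) * (2 * n)! * (2 * i + 1)! =
      (2 * (n + i) + 1)! := by
    rw [show 2 * (n + i) + 1 = 2 * n + (2 * i + 1) by ring, choose_symm_add]
    exact_mod_cast add_choose_mul_factorial_mul_factorial _ _
  have hchoose : ((2 * (n + i) + 1).choose (2 * n) : ℚ) ≠ 0 := by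
    exact_mod_cast (choose_pos (by omega)).ne'
  rw [← hfac, xCscCoeff, sincCoeff]
  field_simp
  ring

theorem sum_antidiagonal_xCscCoeff_mul_sincCoeff (m : ℕ) :
    ∑ p ∈ antidiagonal m, xCscCoeff p.1 * sincCoeff p.2 = if m = 0 then 1 else 0 := by
  rcases eq_or_ne m 0 with rfl | hm
  · norm_num [xCscCoeff, sincCoeff]
  calc ∑ p ∈ antidiagonal m, xCscCoeff p.1 * sincCoeff p.2
      = ∑ p ∈ antidiagonal m, (-1) ^ (m + 1) / (2 * m + 1)! *
          (((2 * m + 1).choose (2 * p.1) : ℚ) * (4 ^ p.1 - 2) * bernoulli (2 * p.1)) :=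
        sum_congr rfl fun p hp => by rw [← mem_antidiagonal.mp hp, xCscCoeff_mul_sincCoeff]
    _ = 0 := by
        rw [← mul_sum, Nat.sum_antidiagonal_eq_sum_range_succ_mk,
          sum_range_choose_two_mul_mul_four_pow_sub_two_mul_bernoulli hm, mul_zero]
    _ = _ := (if_neg hm).symm

theorem two_sub_two_zpow_mul_riemannZeta_two_mul_nat (n : ℕ) :
    (2 - (2 : ℂ) ^ ((2 : ℤ) - 2 * n)) * riemannZeta (2 * n) = π ^ (2 * n) * xCscCoeff n := by
  have h4 : (2 - (2 : ℂ) ^ ((2 : ℤ) - 2 * n)) * 2 ^ (2 * (n : ℤ) - 1) = 4 ^ n - 2 := by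
    rw [sub_mul, ← zpow_one_add₀ two_ne_zero, ← zpow_add₀ two_ne_zero,
      show (1 : ℤ) + (2 * n - 1) = 2 * n by ring,
      show (2 : ℤ) - 2 * n + (2 * n - 1) = 1 by ring, zpow_mul]
    norm_num
  rw [riemannZeta_two_mul_nat', xCscCoeff]
  push_cast
  rw [← h4]
  ring

theorem summand_eq_xCscCoeff_mul_sincCoeff (k n i : ℕ) :
    ((2 * (k + (n + i)) - 1)! : ℂ) *
        (2 - (2 : ℂ) ^
          ((2 : ℤ) - 2 * ((k + (n + i) : ℕ) : ℤ) + 2 * ((k + i : ℕ) : ℤ))) *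
        riemannZeta (2 * (((k + (n + i) : ℕ) : ℂ) - ((k + i : ℕ) : ℂ))) *
        ((-1) ^ (k + i + k) * (π : ℂ) ^ (2 * (k + i - k)) /
          (((2 * (k + i) - 2 * k + 1)! : ℂ) * ((2 * k - 1)! : ℂ))) =
      (2 * (k + (n + i)) - 1)! / (2 * k - 1)! * π ^ (2 * (n + i)) *
        ((xCscCoeff n * sincCoeff i : ℚ) : ℂ) := by
  rw [show (2 : ℤ) - 2 * ((k + (n + i) : ℕ) : ℤ) + 2 * ((k + i : ℕ) : ℤ) = 2 - 2 * n by
      push_cast; ring,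
    show ((k + (n + i) : ℕ) : ℂ) - ((k + i : ℕ) : ℂ) = n by push_cast; ring,
    show 2 * (k + i) - 2 * k + 1 = 2 * i + 1 by omega, Nat.add_sub_cancel_left,
    show k + i + k = i + 2 * k by ring, pow_add, pow_mul, neg_one_sq, one_pow, mul_one,
    mul_assoc _ _ (riemannZeta _), two_sub_two_zpow_mul_riemannZeta_two_mul_nat, sincCoeff]
  push_cast
  field_simp
  ring

theorem matrix_inverse_entries_general (j k : ℕ) (hkj : k ≤ j) :
    ∑ ℓ ∈ Finset.Icc k j,
        (Nat.factorial (2 * j - 1) : ℂ) * (2 - (2 : ℂ) ^ ((2 : ℤ) - 2 * j + 2 * ℓ)) *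
          riemannZeta (2 * (j - ℓ)) *
          ((-1) ^ (ℓ + k) * (π : ℂ) ^ (2 * (ℓ - k)) /
            ((Nat.factorial (2 * ℓ - 2 * k + 1) : ℂ) * (Nat.factorial (2 * k - 1) : ℂ))) =
      if j = k then 1 else 0 := by
  obtain ⟨m, rfl⟩ := Nat.exists_eq_add_of_le hkj
  rw [sum_Icc_add_eq_sum_antidiagonal]
  calc _ = ∑ p ∈ antidiagonal m, (2 * (k + m) - 1)! / (2 * k - 1)! * π ^ (2 * m) *
        ((xCscCoeff p.1 * sincCoeff p.2 : ℚ) : ℂ) := by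
        refine sum_congr rfl fun ⟨n, i⟩ h => ?_
        obtain rfl : n + i = m := mem_antidiagonal.mp h
        exact summand_eq_xCscCoeff_mul_sincCoeff k n i
    _ = _ := by
        rw [← mul_sum, ← Rat.cast_sum, sum_antidiagonal_xCscCoeff_mul_sincCoeff]
        rcases eq_or_ne m 0 with rfl | hm
        · simp [factorial_ne_zero]
        · simp [hm]

/-- For all natural numbers `j, k` with `1 ≤ k ≤ j`,
`∑_{ℓ=k}^j (2j-1)!·(2 - 2^{2-2j+2ℓ})·ζ(2(j-ℓ))·(-1)^{ℓ+k}·π^{2(ℓ-k)}/((2ℓ-2k+1)!·(2k-1)!)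
  = δ_{j,k}`, where `ζ(0) = -1/2`.  In matrix terms, the lower triangular matrix with
entries `a_{j,k} = (2j-1)!(2-2^{2-2j+2k})ζ(2j-2k)` has inverse with entries
`b_{j,k} = (-1)^{j+k}π^{2(j-k)}/((2j-2k+1)!(2k-1)!)`. -/
theorem matrix_inverse_entries (j k : ℕ) (hk : 1 ≤ k) (hkj : k ≤ j) :
    ∑ ℓ ∈ Finset.Icc k j,
        (Nat.factorial (2 * j - 1) : ℂ) * (2 - (2 : ℂ) ^ ((2 : ℤ) - 2 * j + 2 * ℓ)) *
          riemannZeta (2 * (j - ℓ)) *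
          ((-1) ^ (ℓ + k) * (π : ℂ) ^ (2 * (ℓ - k)) /
            ((Nat.factorial (2 * ℓ - 2 * k + 1) : ℂ) * (Nat.factorial (2 * k - 1) : ℂ))) =
      if j = k then 1 else 0 :=
  matrix_inverse_entries_general j k hkj
end
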